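/- arXiv:1201.0533 — 2 statements merged into one kernel-verified Lean document; each statement's English description precedes it below -/
import Mathlib

section
/- Let {X_k, F_k}_{k≥0} be a discrete-time real-valued conditionally symmetric supermartingale, and let η_k = X_k − E[X_k | F_{k−1}]. Assume that for some constants d, σ > 0, almost surely η_k ≤ d and E[η_k² | F_{k−1}] ≤ σ² for every k ≥ 1. Set γ = σ²/d² and δ = α/d. Then for every α ≥ 0 with δ ∈ [0,1) and every n ≥ 1, P( max_{1≤k≤n} (X_k − X_0) ≥ αn ) ≤ exp(−n E(γ,δ)). -/
open MeasureTheory ProbabilityTheory Filter Set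

/-- The exponent `E(γ, δ)` from the paper: `E(γ,δ) = δ x − ln(1 + γ(cosh x − 1))` where
`x = ln( (δ(1−γ) + √(δ²(1−γ)² + γ²(1−δ²))) / (γ(1−δ)) )`. -/
noncomputable def Eexp (γ δ : ℝ) : ℝ :=
  δ * Real.log ((δ * (1 - γ) + Real.sqrt (δ ^ 2 * (1 - γ) ^ 2 + γ ^ 2 * (1 - δ ^ 2)))
      / (γ * (1 - δ)))
    - Real.log (1 + γ *
        (Real.cosh (Real.log ((δ * (1 - γ)
            + Real.sqrt (δ ^ 2 * (1 - γ) ^ 2 + γ ^ 2 * (1 - δ ^ 2))) / (γ * (1 - δ)))) - 1))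

/-!
Write `η_k = X_k − E[X_k | F_{k−1}]`. Conditional symmetry makes `E[sinh(tη_k) | F_{k−1}]` vanish
and turns `η_k ≤ d` into `|η_k| ≤ d`; as `(cosh u − 1) / u²` increases in `|u|`, this gives
`E[exp(tη_k) | F_{k−1}] = E[cosh(tη_k) | F_{k−1}] ≤ 1 + γ (cosh(td) − 1) =: exp B`.
Since `X` is a supermartingale, `X_k − X_{k−1} ≤ η_k`, so for `t ≥ 0` the process
`exp(t(X_k − X_0) − kB)` is a nonnegative supermartingale started at `1`, and Ville's maximal
inequality bounds the probability that it reaches `exp(n(tα − B))` by `exp(−n(tα − B))`.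
With `t = x / d` the exponent `tα − B` is `δx − B = E(γ, δ)`.
-/

lemma Real.cosh_mul_le_one_add_div_sq_mul_sq {u d : ℝ} (hd : 0 < d) (hu : |u| ≤ d) (t : ℝ) :
    Real.cosh (t * u) ≤ 1 + (Real.cosh (t * d) - 1) / d ^ 2 * u ^ 2 := by
  have hsq : (t * u) ^ 2 ≤ (t * d) ^ 2 := by
    rw [mul_pow, mul_pow]
    exact mul_le_mul_of_nonneg_left (sq_le_sq' (abs_le.1 hu).1 (abs_le.1 hu).2) (sq_nonneg t)
  have cosh_sub_one (r : ℝ) :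
      HasSum (fun n : ℕ => r ^ (2 * (n + 1)) / (2 * (n + 1)).factorial) (Real.cosh r - 1) := by
    simpa using (hasSum_nat_add_iff' 1).2 (Real.hasSum_cosh r)
  -- `(cosh r - 1) / r ^ 2 = ∑ r ^ (2 n) / (2 n + 2)!` is increasing in `|r|`
  have term_le (n : ℕ) : (t * u) ^ (2 * (n + 1)) / ((2 * (n + 1)).factorial : ℝ)
      ≤ (u ^ 2 / d ^ 2) * ((t * d) ^ (2 * (n + 1)) / (2 * (n + 1)).factorial) := by
    rw [← mul_div_assoc]
    gcongr
    calc (t * u) ^ (2 * (n + 1)) = u ^ 2 * (t ^ 2 * ((t * u) ^ 2) ^ n) := by ring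
      _ ≤ u ^ 2 * (t ^ 2 * ((t * d) ^ 2) ^ n) := by gcongr
      _ = u ^ 2 / d ^ 2 * (t * d) ^ (2 * (n + 1)) := by field_simp; ring
  calc Real.cosh (t * u)
      ≤ 1 + u ^ 2 / d ^ 2 * (Real.cosh (t * d) - 1) := by
        linarith [hasSum_le term_le (cosh_sub_one _) ((cosh_sub_one _).mul_left (u ^ 2 / d ^ 2))]
    _ = 1 + (Real.cosh (t * d) - 1) / d ^ 2 * u ^ 2 := by ring

/-- The point `x` in the definition of `Eexp`, where `δ x − ln(1 + γ (cosh x − 1))` is maximal. -/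
noncomputable def EexpArg (γ δ : ℝ) : ℝ :=
  Real.log ((δ * (1 - γ) + Real.sqrt (δ ^ 2 * (1 - γ) ^ 2 + γ ^ 2 * (1 - δ ^ 2))) / (γ * (1 - δ)))

lemma EexpArg_nonneg {γ δ : ℝ} (hγ : 0 ≤ γ) (hδ0 : 0 ≤ δ) (hδ1 : δ < 1) : 0 ≤ EexpArg γ δ := by
  rcases hγ.eq_or_lt with rfl | hγ
  · simp [EexpArg] -- division by `0` makes the argument of the logarithm `0`
  have hden : 0 < γ * (1 - δ) := mul_pos hγ (by linarith)
  have hsqrt :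
      γ * (1 - δ) - δ * (1 - γ) ≤ Real.sqrt (δ ^ 2 * (1 - γ) ^ 2 + γ ^ 2 * (1 - δ ^ 2)) := by
    rcases le_or_gt (γ * (1 - δ) - δ * (1 - γ)) 0 with h | h
    · exact h.trans (Real.sqrt_nonneg _)
    · rw [Real.le_sqrt' h]
      nlinarith [mul_nonneg (mul_nonneg hγ.le hδ0) (sub_nonneg.2 hδ1.le)]
  exact Real.log_nonneg ((le_div_iff₀ hden).2 (by linarith))

lemma Eexp_eq (γ δ : ℝ) :
    Eexp γ δ = δ * EexpArg γ δ - Real.log (1 + γ * (Real.cosh (EexpArg γ δ) - 1)) := rfl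

section

variable {Ω : Type*} {m m0 : MeasurableSpace Ω} {μ : Measure Ω} {F : Filtration ℕ m0}

lemma integrable_comp_of_ae_abs_le [IsFiniteMeasure μ] {η : Ω → ℝ} (hη : Measurable η) {d : ℝ}
    (hd : ∀ᵐ ω ∂μ, |η ω| ≤ d) {g : ℝ → ℝ} (hg : Continuous g) :
    Integrable (fun ω => g (η ω)) μ := by
  obtain ⟨C, hC⟩ := (isCompact_Icc (a := -d) (b := d)).exists_bound_of_continuousOn hg.continuousOn
  refine Integrable.of_bound (hg.measurable.comp hη).aestronglyMeasurable C ?_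
  filter_upwards [hd] with ω h using hC _ (abs_le.1 h)

lemma integrable_exp_of_ae_le [IsFiniteMeasure μ] {f : Ω → ℝ} (hf : AEStronglyMeasurable f μ)
    {C : ℝ} (hC : ∀ᵐ ω ∂μ, f ω ≤ C) : Integrable (fun ω => Real.exp (f ω)) μ := by
  refine Integrable.of_bound (Real.continuous_exp.comp_aestronglyMeasurable hf) (Real.exp C) ?_
  filter_upwards [hC] with ω h
  rw [Real.norm_eq_abs, abs_of_pos (Real.exp_pos _)]
  exact Real.exp_le_exp.2 h

/-- `η` and `-η` have the same conditional law given `m`. -/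
def IsCondSymmetric (μ : Measure Ω) (m : MeasurableSpace Ω) (η : Ω → ℝ) : Prop :=
  ∀ g : ℝ → ℝ, Measurable g → μ[fun ω => g (η ω) | m] =ᵐ[μ] μ[fun ω => g (-η ω) | m]

namespace IsCondSymmetric

variable {η : Ω → ℝ}

lemma integral_comp_eq [IsFiniteMeasure μ] (hm : m ≤ m0) (hη : IsCondSymmetric μ m η) {g : ℝ → ℝ}
    (hg : Measurable g) : ∫ ω, g (η ω) ∂μ = ∫ ω, g (-η ω) ∂μ := by
  rw [← integral_condExp hm, integral_congr_ae (hη g hg), integral_condExp hm]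

lemma measure_preimage_eq [IsFiniteMeasure μ] (hm : m ≤ m0) (hη : IsCondSymmetric μ m η)
    (hη_meas : Measurable η) {S : Set ℝ} (hS : MeasurableSet S) :
    μ (η ⁻¹' S) = μ ((-η) ⁻¹' S) := by
  have integral_indicator_comp {f : Ω → ℝ} (hf : Measurable f) :
      ∫ ω, S.indicator 1 (f ω) ∂μ = μ.real (f ⁻¹' S) := by
    simp_rw [← indicator_comp_right f, Pi.one_comp]
    exact integral_indicator_one (hf hS)
  have h := hη.integral_comp_eq hm (measurable_one.indicator hS)
  rw [integral_indicator_comp hη_meas] at h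
  exact (measureReal_eq_measureReal_iff ..).1 (h.trans (integral_indicator_comp hη_meas.neg))

lemma ae_abs_le [IsFiniteMeasure μ] (hm : m ≤ m0) (hη : IsCondSymmetric μ m η)
    (hη_meas : Measurable η) {d : ℝ} (hbdd : ∀ᵐ ω ∂μ, η ω ≤ d) : ∀ᵐ ω ∂μ, |η ω| ≤ d := by
  have hneg : ∀ᵐ ω ∂μ, -η ω ≤ d := by
    have h := hη.measure_preimage_eq hm hη_meas (measurableSet_Ioi (a := d))
    rw [ae_iff] at hbdd ⊢
    simp only [not_le] at hbdd ⊢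
    exact h ▸ hbdd
  filter_upwards [hbdd, hneg] with ω h h' using abs_le.2 ⟨by linarith, h⟩

lemma condExp_comp_eq_zero_of_odd (hη : IsCondSymmetric μ m η) {g : ℝ → ℝ} (hg : Measurable g)
    (hodd : ∀ x, g (-x) = -g x) : μ[fun ω => g (η ω) | m] =ᵐ[μ] 0 := by
  have h := hη g hg
  simp only [hodd] at h
  replace h := h.trans (condExp_neg (fun ω => g (η ω)) m)
  filter_upwards [h] with ω hω
  simp only [Pi.neg_apply] at hω
  simp only [Pi.zero_apply]
  linarith

lemma condExp_exp_mul_le [IsFiniteMeasure μ] (hm : m ≤ m0) (hη : IsCondSymmetric μ m η)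
    (hη_meas : Measurable η) {d v : ℝ} (hd : 0 < d) (hbdd : ∀ᵐ ω ∂μ, η ω ≤ d)
    (hvar : ∀ᵐ ω ∂μ, μ[fun ω => η ω ^ 2 | m] ω ≤ v) (t : ℝ) :
    μ[fun ω => Real.exp (t * η ω) | m] ≤ᵐ[μ] fun _ => 1 + v / d ^ 2 * (Real.cosh (t * d) - 1) := by
  have habs := hη.ae_abs_le hm hη_meas hbdd
  have hint {g : ℝ → ℝ} (hg : Continuous g) := integrable_comp_of_ae_abs_le (μ := μ) hη_meas habs hg
  set c := (Real.cosh (t * d) - 1) / d ^ 2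
  have hc : 0 ≤ c := div_nonneg (by linarith [Real.one_le_cosh (t * d)]) (by positivity)
  have hsinh : μ[fun ω => Real.sinh (t * η ω) | m] =ᵐ[μ] 0 :=
    hη.condExp_comp_eq_zero_of_odd (g := fun x => Real.sinh (t * x)) (by fun_prop)
      fun x => by rw [mul_neg, Real.sinh_neg]
  have hcosh : μ[fun ω => Real.cosh (t * η ω) | m] ≤ᵐ[μ] μ[fun ω => c * η ω ^ 2 + 1 | m] :=
    condExp_mono (hint (g := fun x => Real.cosh (t * x)) (by fun_prop))
      (hint (g := fun x => c * x ^ 2 + 1) (by fun_prop)) <| by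
      filter_upwards [habs] with ω h
      linarith [Real.cosh_mul_le_one_add_div_sq_mul_sq hd h t]
  have haffine := (ContinuousLinearMap.mul ℝ ℝ c).comp_condExp_add_const_comm hm
    (hint (g := fun x => x ^ 2) (by fun_prop)) 1
  have hsplit : (fun ω => Real.exp (t * η ω))
      = (fun ω => Real.cosh (t * η ω)) + fun ω => Real.sinh (t * η ω) := by
    ext ω; simp [Real.cosh_add_sinh]
  rw [hsplit]
  filter_upwards [condExp_add (hint (g := fun x => Real.cosh (t * x)) (by fun_prop))
    (hint (g := fun x => Real.sinh (t * x)) (by fun_prop)) m, hsinh, hcosh, haffine,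
    hvar] with ω hadd hsinh hcosh haffine hvar
  simp only [ContinuousLinearMap.mul_apply'] at haffine
  rw [hadd, Pi.add_apply, hsinh, Pi.zero_apply, add_zero]
  calc μ[fun ω => Real.cosh (t * η ω) | m] ω
      ≤ μ[fun ω => c * η ω ^ 2 + 1 | m] ω := hcosh
    _ = c * μ[fun ω => η ω ^ 2 | m] ω + 1 := haffine.symm
    _ ≤ c * v + 1 := by gcongr
    _ = 1 + v / d ^ 2 * (Real.cosh (t * d) - 1) := by ring

end IsCondSymmetric

/-- Ville's maximal inequality. -/
lemma MeasureTheory.Supermartingale.maximal_ineq [IsFiniteMeasure μ] {M : ℕ → Ω → ℝ}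
    (hM : Supermartingale M F μ) (hM_nonneg : 0 ≤ M) (c : ℝ) (n : ℕ) :
    c * μ.real {ω | ∃ k ≤ n, c ≤ M k ω} ≤ ∫ ω, M 0 ω ∂μ := by
  set τ : Ω → WithTop ℕ := fun ω => (hittingBtwn M (Ici c) 0 n ω : ℕ)
  have hτ : IsStoppingTime F τ :=
    hM.stronglyAdapted.adapted.isStoppingTime_hittingBtwn measurableSet_Ici
  have hτ_le (ω : Ω) : τ ω ≤ n := WithTop.coe_le_coe.2 (hittingBtwn_le ω)
  have hstopped_le : ∫ ω, stoppedValue M τ ω ∂μ ≤ ∫ ω, M 0 ω ∂μ := by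
    have h := hM.neg.expected_stoppedValue_mono (isStoppingTime_const F 0) hτ
      (fun ω => WithTop.coe_le_coe.2 (Nat.zero_le _)) hτ_le
    rw [stoppedValue_const, show stoppedValue (-M) τ = -stoppedValue M τ from rfl] at h
    simpa only [Pi.neg_apply, integral_neg, neg_le_neg_iff] using h
  have hstopped_int : Integrable (stoppedValue M τ) μ := by
    simpa using (hM.neg.integrable_stoppedValue hτ hτ_le).neg
  set A := {ω | ∃ k ≤ n, c ≤ M k ω}
  have hA : MeasurableSet A := by
    have : A = ⋃ k ∈ Iic n, {ω | c ≤ M k ω} := by ext; simp [A]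
    rw [this]
    exact .biUnion (to_countable _) fun k _ => measurableSet_le measurable_const
      ((hM.stronglyMeasurable k).mono (F.le k)).measurable
  have hc_le (ω : Ω) (hω : ω ∈ A) : c ≤ stoppedValue M τ ω := by
    obtain ⟨k, hk, hck⟩ := hω
    exact stoppedValue_hittingBtwn_mem ⟨k, ⟨Nat.zero_le _, hk⟩, hck⟩
  calc c * μ.real A = ∫ _ in A, c ∂μ := by simp [mul_comm]
    _ ≤ ∫ ω in A, stoppedValue M τ ω ∂μ :=
      setIntegral_mono_on (integrableOn_const (measure_ne_top μ A)) hstopped_int.integrableOn hA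
        hc_le
    _ ≤ ∫ ω, stoppedValue M τ ω ∂μ :=
      setIntegral_le_integral hstopped_int (.of_forall fun ω => hM_nonneg _ ω)
    _ ≤ ∫ ω, M 0 ω ∂μ := hstopped_le

variable {X : ℕ → Ω → ℝ}

lemma MeasureTheory.Supermartingale.ae_sub_le_sub_condExp (hX : Supermartingale X F μ) (i : ℕ) :
    ∀ᵐ ω ∂μ, X (i + 1) ω - X i ω ≤ X (i + 1) ω - μ[X (i + 1) | F i] ω := by
  filter_upwards [hX.condExp_ae_le (Nat.le_succ i)] with ω h
  exact sub_le_sub_left h _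

lemma MeasureTheory.Supermartingale.condExp_exp_mul_sub_le [IsFiniteMeasure μ]
    (hX : Supermartingale X F μ) {t d : ℝ} (ht : 0 ≤ t) {i : ℕ}
    (hbdd : ∀ᵐ ω ∂μ, X (i + 1) ω - μ[X (i + 1) | F i] ω ≤ d) :
    μ[fun ω => Real.exp (t * (X (i + 1) ω - X i ω)) | F i]
      ≤ᵐ[μ] μ[fun ω => Real.exp (t * (X (i + 1) ω - μ[X (i + 1) | F i] ω)) | F i] := by
  have hX_meas (k : ℕ) : StronglyMeasurable[m0] (X k) := (hX.stronglyMeasurable k).mono (F.le k)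
  have hcondExp_meas : StronglyMeasurable[m0] (μ[X (i + 1) | F i]) :=
    stronglyMeasurable_condExp.mono (F.le i)
  have hinc := hX.ae_sub_le_sub_condExp i
  refine condExp_mono ?_ ?_ ?_
  · refine integrable_exp_of_ae_le (C := t * d)
      (((hX_meas _).sub (hX_meas _)).const_mul t).aestronglyMeasurable ?_
    filter_upwards [hinc, hbdd] with ω h h'
    exact mul_le_mul_of_nonneg_left (h.trans h') ht
  · refine integrable_exp_of_ae_le (C := t * d)
      (((hX_meas _).sub hcondExp_meas).const_mul t).aestronglyMeasurable ?_
    filter_upwards [hbdd] with ω h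
    exact mul_le_mul_of_nonneg_left h ht
  · filter_upwards [hinc] with ω h
    exact Real.exp_le_exp.2 (mul_le_mul_of_nonneg_left h ht)

lemma supermartingale_exp_mul_sub_mul [IsFiniteMeasure μ] (hX : StronglyAdapted F X) {t B D : ℝ}
    (ht : 0 ≤ t) (hinc : ∀ i, ∀ᵐ ω ∂μ, X (i + 1) ω - X i ω ≤ D)
    (hmgf : ∀ i, μ[fun ω => Real.exp (t * (X (i + 1) ω - X i ω)) | F i]
      ≤ᵐ[μ] fun _ => Real.exp B) :
    Supermartingale (fun k ω => Real.exp (t * (X k ω - X 0 ω) - k * B)) F μ := by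
  set M : ℕ → Ω → ℝ := fun k ω => Real.exp (t * (X k ω - X 0 ω) - k * B)
  have hX_meas (k : ℕ) : StronglyMeasurable[m0] (X k) := (hX k).mono (F.le k)
  have hexponent (k : ℕ) : StronglyMeasurable[F k] fun ω => t * (X k ω - X 0 ω) - k * B :=
    (((hX k).sub ((hX 0).mono (F.mono k.zero_le))).const_mul t).sub stronglyMeasurable_const
  have hadapted : StronglyAdapted F M := fun k =>
    Real.continuous_exp.comp_stronglyMeasurable (hexponent k)
  have hsum (k : ℕ) : ∀ᵐ ω ∂μ, X k ω - X 0 ω ≤ k * D := by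
    induction k with
    | zero => simp
    | succ k ih =>
      filter_upwards [ih, hinc k] with ω h h'
      push_cast
      linarith
  have hint (k : ℕ) : Integrable (M k) μ := by
    refine integrable_exp_of_ae_le (C := t * (k * D) - k * B)
      ((hexponent k).mono (F.le k)).aestronglyMeasurable ?_
    filter_upwards [hsum k] with ω h
    gcongr
  refine supermartingale_nat hadapted hint fun i => ?_
  have hsplit : M (i + 1) = (fun ω => Real.exp (-B) * M i ω) *
      fun ω => Real.exp (t * (X (i + 1) ω - X i ω)) := by
    ext ω
    simp only [M, Pi.mul_apply, ← Real.exp_add]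
    push_cast
    ring_nf
  have hincrement_int : Integrable (fun ω => Real.exp (t * (X (i + 1) ω - X i ω))) μ := by
    refine integrable_exp_of_ae_le (C := t * D)
      (((hX_meas (i + 1)).sub (hX_meas i)).const_mul t).aestronglyMeasurable ?_
    filter_upwards [hinc i] with ω h
    gcongr
  have hpull := condExp_mul_of_stronglyMeasurable_left ((hadapted i).const_mul (Real.exp (-B)))
    (hsplit ▸ hint (i + 1)) hincrement_int
  rw [hsplit]
  filter_upwards [hpull, hmgf i] with ω hpull hmgf
  rw [hpull, Pi.mul_apply]
  calc Real.exp (-B) * M i ω * μ[fun ω => Real.exp (t * (X (i + 1) ω - X i ω)) | F i] ω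
      ≤ Real.exp (-B) * M i ω * Real.exp B := by gcongr
    _ = M i ω := by rw [mul_right_comm, ← Real.exp_add, neg_add_cancel, Real.exp_zero, one_mul]

lemma measure_exists_mul_le_sub_le_exp [IsProbabilityMeasure μ] {t B : ℝ}
    (hM : Supermartingale (fun k ω => Real.exp (t * (X k ω - X 0 ω) - k * B)) F μ)
    (ht : 0 ≤ t) (hB : 0 ≤ B) (a : ℝ) (n : ℕ) :
    μ {ω | ∃ k, 1 ≤ k ∧ k ≤ n ∧ a * n ≤ X k ω - X 0 ω}
      ≤ ENNReal.ofReal (Real.exp (-(n * (t * a - B)))) := by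
  set c := Real.exp (n * (t * a - B))
  set A := {ω | ∃ k ≤ n, c ≤ Real.exp (t * (X k ω - X 0 ω) - k * B)}
  have hville : c * μ.real A ≤ 1 := by
    simpa using hM.maximal_ineq (fun k ω => (Real.exp_pos _).le) c n
  have hsubset : {ω | ∃ k, 1 ≤ k ∧ k ≤ n ∧ a * n ≤ X k ω - X 0 ω} ⊆ A := by
    rintro ω ⟨k, -, hkn, hk⟩
    refine ⟨k, hkn, Real.exp_le_exp.2 ?_⟩
    have hkn' : (k : ℝ) ≤ n := Nat.cast_le.2 hkn
    nlinarith [mul_le_mul_of_nonneg_left hk ht, mul_le_mul_of_nonneg_right hkn' hB]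
  calc μ {ω | ∃ k, 1 ≤ k ∧ k ≤ n ∧ a * n ≤ X k ω - X 0 ω} ≤ μ A := measure_mono hsubset
    _ = ENNReal.ofReal (μ.real A) := (ofReal_measureReal (measure_ne_top μ A)).symm
    _ ≤ ENNReal.ofReal (Real.exp (-(n * (t * a - B)))) := by
      refine ENNReal.ofReal_le_ofReal ?_
      rw [Real.exp_neg, ← one_div, le_div_iff₀' (Real.exp_pos _)]
      exact hville

end

theorem conditionally_symmetric_supermartingale_bound_general
    {Ω : Type*} {m0 : MeasurableSpace Ω} {μ : Measure Ω} [IsProbabilityMeasure μ]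
    {F : Filtration ℕ m0} {X : ℕ → Ω → ℝ}
    (hsuper : Supermartingale X F μ)
    (hsymm : ∀ k : ℕ, 1 ≤ k → ∀ g : ℝ → ℝ, Measurable g →
      μ[fun ω => g (X k ω - (μ[X k | F (k - 1)]) ω) | F (k - 1)]
        =ᵐ[μ] μ[fun ω => g (-(X k ω - (μ[X k | F (k - 1)]) ω)) | F (k - 1)])
    {d σ : ℝ} (hd : 0 < d)
    (hbdd : ∀ k : ℕ, 1 ≤ k → ∀ᵐ ω ∂μ, X k ω - (μ[X k | F (k - 1)]) ω ≤ d)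
    (hvar : ∀ k : ℕ, 1 ≤ k → ∀ᵐ ω ∂μ,
      (μ[fun ω => (X k ω - (μ[X k | F (k - 1)]) ω) ^ 2 | F (k - 1)]) ω ≤ σ ^ 2)
    {α : ℝ} (hα : 0 ≤ α) (hδ : α / d < 1) (n : ℕ) :
    μ {ω | ∃ k, 1 ≤ k ∧ k ≤ n ∧ α * n ≤ X k ω - X 0 ω}
      ≤ ENNReal.ofReal (Real.exp (-(n : ℝ) * Eexp (σ ^ 2 / d ^ 2) (α / d))) := by
  set γ := σ ^ 2 / d ^ 2
  set x := EexpArg γ (α / d)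
  set B := Real.log (1 + γ * (Real.cosh x - 1))
  have hx : 0 ≤ x := EexpArg_nonneg (by positivity) (div_nonneg hα hd.le) hδ
  have ht : 0 ≤ x / d := div_nonneg hx hd.le
  have hB_arg : 1 ≤ 1 + γ * (Real.cosh x - 1) :=
    le_add_of_nonneg_right (mul_nonneg (by positivity) (sub_nonneg.2 (Real.one_le_cosh x)))
  have hmgf (i : ℕ) : μ[fun ω => Real.exp (x / d * (X (i + 1) ω - X i ω)) | F i]
      ≤ᵐ[μ] fun _ => Real.exp B := by
    -- `F (i + 1 - 1)` and `F i` agree definitionally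
    have hsymm_i : IsCondSymmetric μ (F i) (fun ω => X (i + 1) ω - μ[X (i + 1) | F i] ω) :=
      hsymm (i + 1) i.succ_pos
    have hη_meas : Measurable fun ω => X (i + 1) ω - μ[X (i + 1) | F i] ω :=
      (((hsuper.stronglyMeasurable _).mono (F.le _)).sub
        (stronglyMeasurable_condExp.mono (F.le i))).measurable
    filter_upwards [hsuper.condExp_exp_mul_sub_le ht (hbdd (i + 1) i.succ_pos),
      hsymm_i.condExp_exp_mul_le (F.le i) hη_meas hd (hbdd (i + 1) i.succ_pos)
        (hvar (i + 1) i.succ_pos) (x / d)] with ω h h'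
    rw [Real.exp_log (by linarith)]
    rw [div_mul_cancel₀ _ hd.ne'] at h'
    exact h.trans h'
  have hinc (i : ℕ) : ∀ᵐ ω ∂μ, X (i + 1) ω - X i ω ≤ d := by
    filter_upwards [hsuper.ae_sub_le_sub_condExp i, hbdd (i + 1) i.succ_pos] with ω h h'
    exact h.trans h'
  have hM := supermartingale_exp_mul_sub_mul hsuper.stronglyAdapted ht hinc hmgf
  refine (measure_exists_mul_le_sub_le_exp hM ht (Real.log_nonneg hB_arg) α n).trans_eq ?_
  rw [Eexp_eq]
  congr 2
  field_simp
  ring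

/-- Corollary (supermartingale case): exponential bound for conditionally symmetric
supermartingales, where `η_k = X_k − E[X_k | F_{k−1}]`. -/
theorem conditionally_symmetric_supermartingale_bound
    {Ω : Type*} {m0 : MeasurableSpace Ω} {μ : Measure Ω} [IsProbabilityMeasure μ]
    {F : Filtration ℕ m0} {X : ℕ → Ω → ℝ}
    (hsuper : Supermartingale X F μ)
    (hsymm : ∀ k : ℕ, 1 ≤ k → ∀ g : ℝ → ℝ, Measurable g →
      μ[fun ω => g (X k ω - (μ[X k | F (k - 1)]) ω) | F (k - 1)]
        =ᵐ[μ] μ[fun ω => g (-(X k ω - (μ[X k | F (k - 1)]) ω)) | F (k - 1)])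
    {d σ : ℝ} (hd : 0 < d) (hσ : 0 < σ)
    (hbdd : ∀ k : ℕ, 1 ≤ k → ∀ᵐ ω ∂μ, X k ω - (μ[X k | F (k - 1)]) ω ≤ d)
    (hvar : ∀ k : ℕ, 1 ≤ k → ∀ᵐ ω ∂μ,
      (μ[fun ω => (X k ω - (μ[X k | F (k - 1)]) ω) ^ 2 | F (k - 1)]) ω ≤ σ ^ 2)
    {α : ℝ} (hα : 0 ≤ α) (hδ : α / d < 1) (n : ℕ) (hn : 1 ≤ n) :
    μ {ω | ∃ k, 1 ≤ k ∧ k ≤ n ∧ α * n ≤ X k ω - X 0 ω}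
      ≤ ENNReal.ofReal (Real.exp (-(n : ℝ) * Eexp (σ ^ 2 / d ^ 2) (α / d))) :=
  conditionally_symmetric_supermartingale_bound_general hsuper hsymm hd hbdd hvar hα hδ n
end

section
/- Let {X_k, F_k}_{k≥0} be a discrete-time real-valued conditionally symmetric submartingale, and let η_k = X_k − E[X_k | F_{k−1}]. Assume that for some constants d, σ > 0, almost surely η_k ≥ −d and E[η_k² | F_{k−1}] ≤ σ² for every k ≥ 1. Set γ = σ²/d² and δ = α/d. Then for every α ≥ 0 with δ ∈ [0,1) and every n ≥ 1, P( min_{1≤k≤n} (X_k − X_0) ≤ −αn ) ≤ exp(−n E(γ,δ)). -/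
/-!
Symmetry of `η_k` given `F_{k-1}` together with `η_k ≥ -d` forces `η_k ≤ d`, and it turns
`E[exp(-t η_k) | F_{k-1}]` into `E[cosh(t η_k) | F_{k-1}]`. Since `(cosh y - 1) / y²` increases
with `|y|` (convexity of `sinh` on `[0, ∞)`), the latter is at most
`ρ = 1 + γ (cosh (t d) - 1)` by the conditional variance bound. Hence
`exp (t (X_0 - X_k)) / ρ ^ k` is a nonnegative supermartingale started at `1`, and Ville's maximal
inequality (optional stopping at the first time it reaches `ε = exp (t α n) / ρ ^ n`) bounds the
probability of the event by `1 / ε = exp (-n (δ x - log (1 + γ (cosh x - 1))))` with `x = t d`.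
This holds for every `x ≥ 0`; `E(γ, δ)` is the value at the maximising `x`.
-/

open MeasureTheory ProbabilityTheory Filter Set

open Real

lemma Real.convexOn_sinh_Ici : ConvexOn ℝ (Set.Ici 0) sinh :=
  MonotoneOn.convexOn_of_deriv (convex_Ici 0) continuous_sinh.continuousOn
    differentiable_sinh.differentiableOn fun x hx y hy hxy => by
      rw [interior_Ici, Set.mem_Ioi] at hx hy
      simpa [deriv_sinh, cosh_le_cosh, abs_of_pos hx, abs_of_pos hy] using hxy

lemma Real.sinh_mul_le {c x : ℝ} (hc₀ : 0 ≤ c) (hc₁ : c ≤ 1) (hx : 0 ≤ x) :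
    sinh (c * x) ≤ c * sinh x := by
  simpa using convexOn_sinh_Ici.2 (Set.mem_Ici.2 hx) Set.self_mem_Ici hc₀ (sub_nonneg.2 hc₁)
    (add_sub_cancel c 1)

lemma Real.cosh_le_one_add_sq_div_mul {y D : ℝ} (h : |y| ≤ D) :
    cosh y ≤ 1 + (y / D) ^ 2 * (cosh D - 1) := by
  have cosh_eq (z : ℝ) : cosh z = 1 + 2 * sinh (z / 2) ^ 2 := by
    rw [← mul_div_cancel₀ z two_ne_zero, cosh_two_mul, cosh_sq]; ring_nf
  rcases (abs_nonneg y).trans h |>.eq_or_lt with rfl | hD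
  · simp [abs_nonpos_iff.1 h]
  have hsinh : sinh (|y| / 2) ≤ |y| / D * sinh (D / 2) := by
    have := sinh_mul_le (div_nonneg (abs_nonneg y) hD.le) ((div_le_one hD).2 h) (half_pos hD).le
    rwa [div_mul_div_comm, mul_comm D, mul_div_mul_right _ _ hD.ne'] at this
  have hsinh₀ : 0 ≤ sinh (|y| / 2) := sinh_nonneg_iff.2 (by positivity)
  rw [← cosh_abs, cosh_eq, cosh_eq, ← sq_abs (y / D), abs_div, abs_of_pos hD]
  nlinarith [mul_self_le_mul_self hsinh₀ hsinh]

lemma Real.cosh_mul_le_one_add_sq_div_mul {t y d : ℝ} (ht : 0 ≤ t) (hy : |y| ≤ d) :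
    cosh (t * y) ≤ 1 + (y / d) ^ 2 * (cosh (t * d) - 1) := by
  rcases ht.eq_or_lt with rfl | ht
  · simp
  have h := cosh_le_one_add_sq_div_mul (y := t * y) (D := t * d)
    (by rw [abs_mul, abs_of_pos ht]; exact mul_le_mul_of_nonneg_left hy ht.le)
  rwa [mul_div_mul_left _ _ ht.ne'] at h

/-- The logarithm is the maximiser of `x ↦ δ x - log (1 + γ (cosh x - 1))`, so `Eexp γ δ` is the
maximum; only its sign matters here. -/
lemma Eexp_maximizer_nonneg {γ δ : ℝ} (hγ : 0 < γ) (hδ₀ : 0 ≤ δ) (hδ₁ : δ < 1) :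
    0 ≤ log ((δ * (1 - γ) + √(δ ^ 2 * (1 - γ) ^ 2 + γ ^ 2 * (1 - δ ^ 2))) / (γ * (1 - δ))) := by
  refine log_nonneg ((one_le_div (mul_pos hγ (sub_pos.2 hδ₁))).2 ?_)
  suffices γ * (1 - δ) - δ * (1 - γ) ≤ √(δ ^ 2 * (1 - γ) ^ 2 + γ ^ 2 * (1 - δ ^ 2)) by linarith
  refine le_sqrt_of_sq_le ?_
  nlinarith [mul_nonneg (mul_nonneg hγ.le hδ₀) (sub_nonneg.2 hδ₁.le)]

def CondSymmetric {Ω : Type*} {m0 : MeasurableSpace Ω} (μ : Measure Ω) (m : MeasurableSpace Ω)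
    (η : Ω → ℝ) : Prop :=
  ∀ g : ℝ → ℝ, Measurable g → μ[fun ω => g (η ω) | m] =ᵐ[μ] μ[fun ω => g (-η ω) | m]

section CondSymmetric

variable {Ω : Type*} {m m0 : MeasurableSpace Ω} {μ : Measure Ω} {η : Ω → ℝ} {d σ t : ℝ}

lemma CondSymmetric.ae_le_of_ae_neg_le [IsFiniteMeasure μ] (hs : CondSymmetric μ m η)
    (hm : m ≤ m0) (hη : Measurable η) (hbdd : ∀ᵐ ω ∂μ, -d ≤ η ω) : ∀ᵐ ω ∂μ, η ω ≤ d := by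
  set g : ℝ → ℝ := (Ioi d).indicator 1
  have hg : Measurable g := measurable_const.indicator measurableSet_Ioi
  have hneg : (fun ω => g (-η ω)) =ᵐ[μ] 0 := by
    filter_upwards [hbdd] with ω hω
    exact indicator_of_notMem (by simp only [mem_Ioi]; linarith) _
  have hzero : μ.real {ω | d < η ω} = 0 := by
    rw [← integral_indicator_one (measurableSet_lt measurable_const hη), ← integral_condExp hm]
    calc ∫ ω, (μ[fun ω => g (η ω) | m]) ω ∂μ
        = ∫ ω, (μ[(0 : Ω → ℝ) | m]) ω ∂μ :=
          integral_congr_ae ((hs _ hg).trans (condExp_congr_ae hneg))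
      _ = 0 := by simp
  rw [measureReal_eq_zero_iff] at hzero
  exact ae_iff.2 (by simpa only [not_le] using hzero)

lemma CondSymmetric.condExp_exp_neg_ae_eq_condExp_cosh (hs : CondSymmetric μ m η)
    (hpos : Integrable (fun ω => exp (t * η ω)) μ)
    (hneg : Integrable (fun ω => exp (-(t * η ω))) μ) :
    μ[fun ω => exp (-(t * η ω)) | m] =ᵐ[μ] μ[fun ω => cosh (t * η ω) | m] := by
  have hcosh : (fun ω => cosh (t * η ω))
      = (2 : ℝ)⁻¹ • ((fun ω => exp (t * η ω)) + fun ω => exp (-(t * η ω))) := by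
    ext ω; simp only [Pi.smul_apply, Pi.add_apply, smul_eq_mul, cosh_eq]; ring
  have hsymm := hs (fun x => exp (t * x)) (by fun_prop)
  simp only [mul_neg] at hsymm
  rw [hcosh]
  filter_upwards [condExp_smul (2 : ℝ)⁻¹ ((fun ω => exp (t * η ω)) + fun ω => exp (-(t * η ω))) m,
    condExp_add hpos hneg m, hsymm] with ω h₁ h₂ h₃
  simp only [h₁, Pi.smul_apply, h₂, Pi.add_apply, h₃, smul_eq_mul]
  ring

lemma condExp_cosh_mul_le [IsFiniteMeasure μ] (hm : m ≤ m0) (hη : Measurable η) (ht : 0 ≤ t)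
    (habs : ∀ᵐ ω ∂μ, |η ω| ≤ d) (hvar : ∀ᵐ ω ∂μ, μ[fun ω => η ω ^ 2 | m] ω ≤ σ ^ 2) :
    μ[fun ω => cosh (t * η ω) | m] ≤ᵐ[μ] fun _ => 1 + σ ^ 2 / d ^ 2 * (cosh (t * d) - 1) := by
  set K := (cosh (t * d) - 1) / d ^ 2
  have hK : 0 ≤ K := div_nonneg (sub_nonneg.2 (one_le_cosh _)) (sq_nonneg d)
  have hsq : Integrable (fun ω => η ω ^ 2) μ :=
    .of_bound (hη.pow_const 2).aestronglyMeasurable (d ^ 2) <| by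
      filter_upwards [habs] with ω hω
      simpa [sq_abs] using pow_le_pow_left₀ (abs_nonneg _) hω 2
  have hcosh : Integrable (fun ω => cosh (t * η ω)) μ :=
    .of_bound (by fun_prop) (cosh (t * d)) <| by
      filter_upwards [habs] with ω hω
      simpa [abs_of_pos (cosh_pos _), cosh_le_cosh, abs_mul, abs_of_nonneg ht] using
        mul_le_mul_of_nonneg_left (hω.trans (le_abs_self d)) ht
  have hpt : (fun ω => cosh (t * η ω)) ≤ᵐ[μ] (fun _ => (1 : ℝ)) + K • fun ω => η ω ^ 2 := by
    filter_upwards [habs] with ω hω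
    refine (cosh_mul_le_one_add_sq_div_mul ht hω).trans_eq ?_
    simp only [K, Pi.add_apply, Pi.smul_apply, smul_eq_mul]
    ring
  filter_upwards [condExp_mono hcosh ((integrable_const 1).add (hsq.smul K)) hpt,
    condExp_add (integrable_const (1 : ℝ)) (hsq.smul K) m, condExp_smul K (fun ω => η ω ^ 2) m,
    hvar] with ω h₁ h₂ h₃ h₄
  rw [h₂, Pi.add_apply, h₃, condExp_const hm] at h₁
  simp only [Pi.smul_apply, smul_eq_mul] at h₁
  calc (μ[fun ω => cosh (t * η ω) | m]) ω ≤ 1 + K * (μ[fun ω => η ω ^ 2 | m]) ω := h₁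
    _ ≤ 1 + K * σ ^ 2 := by gcongr
    _ = 1 + σ ^ 2 / d ^ 2 * (cosh (t * d) - 1) := by simp only [K]; ring

lemma CondSymmetric.condExp_exp_neg_mul_le [IsFiniteMeasure μ] (hs : CondSymmetric μ m η)
    (hm : m ≤ m0) (hη : Measurable η) (ht : 0 ≤ t) (hbdd : ∀ᵐ ω ∂μ, -d ≤ η ω)
    (hvar : ∀ᵐ ω ∂μ, μ[fun ω => η ω ^ 2 | m] ω ≤ σ ^ 2) :
    μ[fun ω => exp (-(t * η ω)) | m] ≤ᵐ[μ] fun _ => 1 + σ ^ 2 / d ^ 2 * (cosh (t * d) - 1) := by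
  have habs : ∀ᵐ ω ∂μ, |η ω| ≤ d := by
    filter_upwards [hbdd, hs.ae_le_of_ae_neg_le hm hη hbdd] with ω h₁ h₂
    exact abs_le.2 ⟨h₁, h₂⟩
  have hexp (s : ℝ) (hs : |s| ≤ t) : Integrable (fun ω => exp (s * η ω)) μ :=
    .of_bound (by fun_prop) (exp (t * d)) <| by
      filter_upwards [habs] with ω hω
      rw [norm_eq_abs, abs_exp, exp_le_exp]
      calc s * η ω ≤ |s| * |η ω| := (le_abs_self _).trans (abs_mul _ _).le
        _ ≤ t * d := mul_le_mul hs hω (abs_nonneg _) ht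
  have hneg := hexp (-t) (by rw [abs_neg, abs_of_nonneg ht])
  simp only [neg_mul] at hneg
  exact (hs.condExp_exp_neg_ae_eq_condExp_cosh (hexp t (abs_of_nonneg ht).le) hneg).le.trans
    (condExp_cosh_mul_le hm hη ht habs hvar)

end CondSymmetric

namespace MeasureTheory

variable {Ω : Type*} {m0 : MeasurableSpace Ω} {μ : Measure Ω} {F : Filtration ℕ m0}

theorem Supermartingale.maximal_ineq_s8 [IsFiniteMeasure μ]
    {f : ℕ → Ω → ℝ} (hsup : Supermartingale f F μ) (hnonneg : 0 ≤ f) (ε : ℝ) (n : ℕ) :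
    ε * μ.real {ω | ε ≤ (Finset.range (n + 1)).sup' Finset.nonempty_range_add_one fun k => f k ω}
      ≤ ∫ ω, f 0 ω ∂μ := by
  set S := {ω | ε ≤ (Finset.range (n + 1)).sup' Finset.nonempty_range_add_one fun k => f k ω}
  set τ : Ω → WithTop ℕ := fun ω => (hittingBtwn f {y | ε ≤ y} 0 n ω : ℕ)
  have hτ : IsStoppingTime F τ :=
    hsup.stronglyAdapted.adapted.isStoppingTime_hittingBtwn measurableSet_Ici
  have hτn (ω : Ω) : τ ω ≤ n := WithTop.coe_le_coe.2 (hittingBtwn_le ω)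
  have hint : Integrable (stoppedValue f τ) μ :=
    integrable_stoppedValue ℕ hτ hsup.integrable hτn
  have hS : MeasurableSet S := measurableSet_le measurable_const
    (Finset.measurable_range_sup'' fun k _ =>
      (hsup.stronglyAdapted k).measurable.mono (F.le k) le_rfl)
  have hge (ω : Ω) (hω : ω ∈ S) : ε ≤ stoppedValue f τ ω := by
    refine stoppedValue_hittingBtwn_mem ?_
    obtain ⟨j, hj, hje⟩ := (Finset.le_sup'_iff (f := fun k => f k ω) _).1 hω
    exact ⟨j, ⟨j.zero_le, Nat.lt_succ_iff.1 (Finset.mem_range.1 hj)⟩, hje⟩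
  have hstop : ∫ ω, stoppedValue f τ ω ∂μ ≤ ∫ ω, f 0 ω ∂μ := by
    have := hsup.neg.expected_stoppedValue_mono (isStoppingTime_const F 0) hτ
      (fun ω => WithTop.coe_le_coe.2 (Nat.zero_le _)) hτn
    have hneg (σ : Ω → WithTop ℕ) : stoppedValue (-f) σ = -stoppedValue f σ := rfl
    rw [hneg, hneg, stoppedValue_const] at this
    simp only [Pi.neg_apply, integral_neg] at this
    exact neg_le_neg_iff.1 this
  calc ε * μ.real S = μ.real S • ε := mul_comm _ _
    _ ≤ ∫ ω in S, stoppedValue f τ ω ∂μ :=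
      setIntegral_ge_of_const_le hS (measure_ne_top μ S) hge hint.integrableOn
    _ ≤ ∫ ω, stoppedValue f τ ω ∂μ :=
      setIntegral_le_integral hint (.of_forall fun ω => hnonneg _ ω)
    _ ≤ ∫ ω, f 0 ω ∂μ := hstop

variable {X : ℕ → Ω → ℝ} {d σ t ρ : ℝ}

lemma Submartingale.ae_sub_le_mul (hsub : Submartingale X F μ)
    (hbdd : ∀ k, ∀ᵐ ω ∂μ, -d ≤ X (k + 1) ω - μ[X (k + 1) | F k] ω) (k : ℕ) :
    ∀ᵐ ω ∂μ, X 0 ω - X k ω ≤ k * d := by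
  induction k with
  | zero => simp
  | succ k ih =>
    filter_upwards [ih, hbdd k, hsub.ae_le_condExp k.le_succ] with ω h₁ h₂ h₃
    push_cast
    linarith

lemma Submartingale.measurable_sub_condExp (hsub : Submartingale X F μ) (k : ℕ) :
    Measurable fun ω => X (k + 1) ω - μ[X (k + 1) | F k] ω :=
  (hsub.stronglyAdapted (k + 1) |>.mono (F.le _) |>.measurable : Measurable (X (k + 1))).sub
    (stronglyMeasurable_condExp.measurable.mono (F.le k) le_rfl)

lemma Submartingale.measurable_exp_mul_sub (hsub : Submartingale X F μ) (k : ℕ) :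
    Measurable[F k] fun ω => exp (t * (X 0 ω - X k ω)) :=
  ((((hsub.stronglyAdapted 0).mono (F.mono k.zero_le)).measurable.sub
    (hsub.stronglyAdapted k).measurable).const_mul t).exp

lemma Submartingale.integrable_exp_mul_sub [IsFiniteMeasure μ] (hsub : Submartingale X F μ)
    (ht : 0 ≤ t) (hbdd : ∀ k, ∀ᵐ ω ∂μ, -d ≤ X (k + 1) ω - μ[X (k + 1) | F k] ω) (k : ℕ) :
    Integrable (fun ω => exp (t * (X 0 ω - X k ω))) μ :=
  .of_bound ((hsub.measurable_exp_mul_sub k).mono (F.le k) le_rfl).aestronglyMeasurable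
    (exp (t * (k * d))) <| by
      filter_upwards [hsub.ae_sub_le_mul hbdd k] with ω hω
      simpa only [norm_eq_abs, abs_exp, exp_le_exp] using mul_le_mul_of_nonneg_left hω ht

lemma Submartingale.condExp_exp_mul_sub_le [IsFiniteMeasure μ] (hsub : Submartingale X F μ)
    (ht : 0 ≤ t) (hρ : 0 < ρ)
    (hbdd : ∀ k, ∀ᵐ ω ∂μ, -d ≤ X (k + 1) ω - μ[X (k + 1) | F k] ω)
    (hmgf : ∀ k, μ[fun ω => exp (-(t * (X (k + 1) ω - μ[X (k + 1) | F k] ω))) | F k]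
      ≤ᵐ[μ] fun _ => ρ) (k : ℕ) :
    μ[fun ω => exp (t * (X 0 ω - X (k + 1) ω)) / ρ ^ (k + 1) | F k]
      ≤ᵐ[μ] fun ω => exp (t * (X 0 ω - X k ω)) / ρ ^ k := by
  set c := μ[X (k + 1) | F k]
  set f : Ω → ℝ := fun ω => exp (t * (X 0 ω - c ω)) / ρ ^ (k + 1)
  set g : Ω → ℝ := fun ω => exp (-(t * (X (k + 1) ω - c ω)))
  have hfg : (fun ω => exp (t * (X 0 ω - X (k + 1) ω)) / ρ ^ (k + 1)) = f * g := by
    ext ω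
    simp only [f, g, Pi.mul_apply, div_mul_eq_mul_div, ← exp_add]
    ring_nf
  have hf : StronglyMeasurable[F k] f :=
    ((((hsub.stronglyAdapted 0).mono (F.mono k.zero_le)).measurable.sub
      stronglyMeasurable_condExp.measurable).const_mul t).exp.div_const _ |>.stronglyMeasurable
  have hg : Integrable g μ :=
    .of_bound ((hsub.measurable_sub_condExp k).const_mul t).neg.exp.aestronglyMeasurable
      (exp (t * d)) <| by
        filter_upwards [hbdd k] with ω hω
        simp only [g, norm_eq_abs, abs_exp, exp_le_exp]
        nlinarith
  have hfg_int : Integrable (f * g) μ :=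
    hfg ▸ (hsub.integrable_exp_mul_sub ht hbdd (k + 1)).div_const _
  rw [hfg]
  filter_upwards [condExp_mul_of_stronglyMeasurable_left hf hfg_int hg, hmgf k,
    hsub.ae_le_condExp k.le_succ] with ω h₁ h₂ h₃
  rw [h₁, Pi.mul_apply]
  calc f ω * (μ[g | F k]) ω ≤ f ω * ρ := mul_le_mul_of_nonneg_left h₂ (by positivity)
    _ = exp (t * (X 0 ω - c ω)) / ρ ^ k := by
      simp only [f, pow_succ]; field_simp
    _ ≤ exp (t * (X 0 ω - X k ω)) / ρ ^ k := by gcongr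

theorem Submartingale.supermartingale_exp_mul_sub_div_pow [IsFiniteMeasure μ]
    (hsub : Submartingale X F μ) (ht : 0 ≤ t) (hρ : 0 < ρ)
    (hbdd : ∀ k, ∀ᵐ ω ∂μ, -d ≤ X (k + 1) ω - μ[X (k + 1) | F k] ω)
    (hmgf : ∀ k, μ[fun ω => exp (-(t * (X (k + 1) ω - μ[X (k + 1) | F k] ω))) | F k]
      ≤ᵐ[μ] fun _ => ρ) :
    Supermartingale (fun k ω => exp (t * (X 0 ω - X k ω)) / ρ ^ k) F μ :=
  supermartingale_nat (fun k => ((hsub.measurable_exp_mul_sub k).div_const _).stronglyMeasurable)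
    (fun k => (hsub.integrable_exp_mul_sub ht hbdd k).div_const _)
    (hsub.condExp_exp_mul_sub_le ht hρ hbdd hmgf)

theorem Submartingale.measure_exists_sub_le_le_exp [IsProbabilityMeasure μ]
    (hsub : Submartingale X F μ)
    (hsymm : ∀ k, CondSymmetric μ (F k) fun ω => X (k + 1) ω - μ[X (k + 1) | F k] ω)
    (hd : 0 < d) (hbdd : ∀ k, ∀ᵐ ω ∂μ, -d ≤ X (k + 1) ω - μ[X (k + 1) | F k] ω)
    (hvar : ∀ k, ∀ᵐ ω ∂μ, μ[fun ω => (X (k + 1) ω - μ[X (k + 1) | F k] ω) ^ 2 | F k] ω ≤ σ ^ 2)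
    {x : ℝ} (hx : 0 ≤ x) (α : ℝ) (n : ℕ) :
    μ {ω | ∃ k ≤ n, X k ω - X 0 ω ≤ -(α * n)}
      ≤ ENNReal.ofReal (exp (-n * (α / d * x - log (1 + σ ^ 2 / d ^ 2 * (cosh x - 1))))) := by
  set ρ := 1 + σ ^ 2 / d ^ 2 * (cosh x - 1)
  have hρ : 1 ≤ ρ := le_add_of_nonneg_right (by have := one_le_cosh x; positivity)
  set t := x / d
  have ht : 0 ≤ t := div_nonneg hx hd.le
  have hmgf (k : ℕ) : μ[fun ω => exp (-(t * (X (k + 1) ω - μ[X (k + 1) | F k] ω))) | F k]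
      ≤ᵐ[μ] fun _ => ρ := by
    simpa only [t, div_mul_cancel₀ x hd.ne'] using (hsymm k).condExp_exp_neg_mul_le (F.le k)
      (hsub.measurable_sub_condExp k) ht (hbdd k) (hvar k)
  set M : ℕ → Ω → ℝ := fun k ω => exp (t * (X 0 ω - X k ω)) / ρ ^ k
  have hM : Supermartingale M F μ :=
    hsub.supermartingale_exp_mul_sub_div_pow ht (by positivity) hbdd hmgf
  set ε := exp (t * (α * n)) / ρ ^ n
  set S := {ω | ε ≤ (Finset.range (n + 1)).sup' Finset.nonempty_range_add_one fun k => M k ω}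
  have hmax : ε * μ.real S ≤ 1 := by
    have h := hM.maximal_ineq_s8 (fun k ω => by positivity) ε n
    rwa [show ∫ ω, M 0 ω ∂μ = 1 by simp [M]] at h
  have hsubset : {ω | ∃ k ≤ n, X k ω - X 0 ω ≤ -(α * n)} ⊆ S := by
    rintro ω ⟨k, hkn, hk⟩
    refine le_trans ?_ (Finset.le_sup' (fun k => M k ω) (Finset.mem_range_succ_iff.2 hkn))
    exact div_le_div₀ (exp_pos _).le (exp_le_exp.2 (by nlinarith)) (by positivity)
      (pow_le_pow_right₀ hρ hkn)
  calc μ {ω | ∃ k ≤ n, X k ω - X 0 ω ≤ -(α * n)} ≤ μ S := measure_mono hsubset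
    _ = ENNReal.ofReal (μ.real S) := (ENNReal.ofReal_toReal (measure_ne_top μ S)).symm
    _ ≤ ENNReal.ofReal ε⁻¹ :=
      ENNReal.ofReal_le_ofReal (by simpa using (le_inv_mul_iff₀ (by positivity : 0 < ε)).2 hmax)
    _ = ENNReal.ofReal (exp (-n * (α / d * x - log (1 + σ ^ 2 / d ^ 2 * (cosh x - 1))))) := by
      rw [inv_div, ← exp_log (by positivity : (0 : ℝ) < ρ), ← exp_nat_mul, ← exp_sub]
      congr 2
      ring

end MeasureTheory

theorem conditionally_symmetric_submartingale_bound_general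
    {Ω : Type*} {m0 : MeasurableSpace Ω} {μ : Measure Ω} [IsProbabilityMeasure μ]
    {F : Filtration ℕ m0} {X : ℕ → Ω → ℝ}
    (hsub : Submartingale X F μ)
    (hsymm : ∀ k : ℕ, 1 ≤ k → ∀ g : ℝ → ℝ, Measurable g →
      μ[fun ω => g (X k ω - (μ[X k | F (k - 1)]) ω) | F (k - 1)]
        =ᵐ[μ] μ[fun ω => g (-(X k ω - (μ[X k | F (k - 1)]) ω)) | F (k - 1)])
    {d σ : ℝ} (hd : 0 < d) (hσ : 0 < σ)
    (hbdd : ∀ k : ℕ, 1 ≤ k → ∀ᵐ ω ∂μ, -d ≤ X k ω - (μ[X k | F (k - 1)]) ω)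
    (hvar : ∀ k : ℕ, 1 ≤ k → ∀ᵐ ω ∂μ,
      (μ[fun ω => (X k ω - (μ[X k | F (k - 1)]) ω) ^ 2 | F (k - 1)]) ω ≤ σ ^ 2)
    {α : ℝ} (hα : 0 ≤ α) (hδ : α / d < 1) (n : ℕ) :
    μ {ω | ∃ k, 1 ≤ k ∧ k ≤ n ∧ X k ω - X 0 ω ≤ -(α * n)}
      ≤ ENNReal.ofReal (Real.exp (-(n : ℝ) * Eexp (σ ^ 2 / d ^ 2) (α / d))) := by
  have hx := Eexp_maximizer_nonneg (by positivity : 0 < σ ^ 2 / d ^ 2) (div_nonneg hα hd.le) hδ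
  refine (measure_mono ?_).trans <| hsub.measure_exists_sub_le_le_exp
    (fun k => hsymm (k + 1) k.succ_pos) hd (fun k => hbdd (k + 1) k.succ_pos)
    (fun k => hvar (k + 1) k.succ_pos) hx α n
  rintro ω ⟨k, -, hkn, hk⟩
  exact ⟨k, hkn, hk⟩

/-- Corollary (submartingale case): exponential bound for conditionally symmetric
submartingales, where `η_k = X_k − E[X_k | F_{k−1}]`. -/
theorem conditionally_symmetric_submartingale_bound
    {Ω : Type*} {m0 : MeasurableSpace Ω} {μ : Measure Ω} [IsProbabilityMeasure μ]
    {F : Filtration ℕ m0} {X : ℕ → Ω → ℝ}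
    (hsub : Submartingale X F μ)
    (hsymm : ∀ k : ℕ, 1 ≤ k → ∀ g : ℝ → ℝ, Measurable g →
      μ[fun ω => g (X k ω - (μ[X k | F (k - 1)]) ω) | F (k - 1)]
        =ᵐ[μ] μ[fun ω => g (-(X k ω - (μ[X k | F (k - 1)]) ω)) | F (k - 1)])
    {d σ : ℝ} (hd : 0 < d) (hσ : 0 < σ)
    (hbdd : ∀ k : ℕ, 1 ≤ k → ∀ᵐ ω ∂μ, -d ≤ X k ω - (μ[X k | F (k - 1)]) ω)
    (hvar : ∀ k : ℕ, 1 ≤ k → ∀ᵐ ω ∂μ,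
      (μ[fun ω => (X k ω - (μ[X k | F (k - 1)]) ω) ^ 2 | F (k - 1)]) ω ≤ σ ^ 2)
    {α : ℝ} (hα : 0 ≤ α) (hδ : α / d < 1) (n : ℕ) (hn : 1 ≤ n) :
    μ {ω | ∃ k, 1 ≤ k ∧ k ≤ n ∧ X k ω - X 0 ω ≤ -(α * n)}
      ≤ ENNReal.ofReal (Real.exp (-(n : ℝ) * Eexp (σ ^ 2 / d ^ 2) (α / d))) :=
  conditionally_symmetric_submartingale_bound_general hsub hsymm hd hσ hbdd hvar hα hδ n
end
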